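/- arXiv:1612.07209 — 4 statements merged into one kernel-verified Lean document; each statement's English description precedes it below -/
import Mathlib

section
/- Suppose Y is smooth, satisfies (Y')² = a₀ + a₁Y + a₂Y² + a₃Y³ with a₃ ≠ 0, takes each value in a nonempty open interval, and u = Y² satisfies −c u + (κ/2)u² + α u'' − β u'''' = A with β > 0. Then a₃² = κ/(105β), a₂ = α/(13β), a₁ = ∓(36α² − 169cβ)/(2·169β)·√(5/(21κβ)) with sign matching a₃ = ∓√(κ/(105β)), and a₀ = 2α(36α² − 169cβ)/(13³κβ²). Moreover the integration constant is forced to equal A = (36α² − 169βc)(1836α² + 845βc)/(8·7·13⁴·κβ²). -/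
open Polynomial in
/-- coefficients forced by the traveling-wave Kawahara ODE with ansatz u = Y². -/
theorem stmt_7 (a₀ a₁ a₂ a₃ c κ α β A : ℝ) (hβ : 0 < β) (hκ : 0 < κ) (ha₃ : a₃ ≠ 0)
    (Y : ℝ → ℝ) (hY : ContDiff ℝ (⊤ : ℕ∞) Y)
    (hell : ∀ ξ : ℝ, (deriv Y ξ)^2 = a₀ + a₁ * Y ξ + a₂ * (Y ξ)^2 + a₃ * (Y ξ)^3)
    (hrange : ∃ p q : ℝ, p < q ∧ Set.Ioo p q ⊆ Set.range Y)
    (u : ℝ → ℝ) (hu : ∀ ξ : ℝ, u ξ = (Y ξ)^2)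
    (hode : ∀ ξ : ℝ, -c * u ξ + (κ/2) * (u ξ)^2 + α * iteratedDeriv 2 u ξ
      - β * iteratedDeriv 4 u ξ = A) :
    a₃^2 = κ / (105 * β) ∧
    a₂ = α / (13 * β) ∧
    ((a₃ = -Real.sqrt (κ / (105 * β)) ∧
        a₁ = Real.sqrt (5 / (21 * κ * β)) * (169 * c * β - 36 * α^2) / (2 * 169 * β)) ∨
     (a₃ = Real.sqrt (κ / (105 * β)) ∧
        a₁ = -(Real.sqrt (5 / (21 * κ * β)) * (169 * c * β - 36 * α^2) / (2 * 169 * β)))) ∧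
    a₀ = 2 * α * (36 * α^2 - 169 * c * β) / (13^3 * κ * β^2) ∧
    A = (36 * α^2 - 169 * β * c) * (1836 * α^2 + 845 * β * c) / (8 * 7 * 13^4 * κ * β^2) := by
  obtain ⟨p, q, hpq, hran⟩ := hrange
  have hβ' : β ≠ 0 := ne_of_gt hβ
  have hκ' : κ ≠ 0 := ne_of_gt hκ
  -- smoothness setup
  have hY0 : ContDiff ℝ (⊤:ℕ∞) Y := hY.of_le (by simp)
  have hY1 : ContDiff ℝ (⊤:ℕ∞) (deriv Y) := (contDiff_infty_iff_deriv.mp hY0).2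
  have dY : ∀ ξ, HasDerivAt Y (deriv Y ξ) ξ :=
    fun ξ => (hY0.differentiable (by simp) ξ).hasDerivAt
  have dY1 : ∀ ξ, HasDerivAt (deriv Y) (deriv (deriv Y) ξ) ξ :=
    fun ξ => (hY1.differentiable (by simp) ξ).hasDerivAt
  -- derivative of the elliptic relation
  have keyB : ∀ ξ, 2 * deriv Y ξ * deriv (deriv Y) ξ
      = (a₁ + 2*a₂*Y ξ + 3*a₃*(Y ξ)^2) * deriv Y ξ := by
    intro ξ
    have h1 : HasDerivAt (fun t => (deriv Y t)^2) (2 * deriv Y ξ * deriv (deriv Y) ξ) ξ := by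
      have := (dY1 ξ).pow 2
      refine this.congr_deriv ?_; push_cast; ring
    have h2 : HasDerivAt (fun t => a₀ + a₁ * Y t + a₂ * (Y t)^2 + a₃ * (Y t)^3)
        ((a₁ + 2*a₂*Y ξ + 3*a₃*(Y ξ)^2) * deriv Y ξ) ξ := by
      have hp2 := (dY ξ).pow 2
      have hp3 := (dY ξ).pow 3
      have := ((((dY ξ).const_mul a₁).const_add a₀).add (hp2.const_mul a₂)).add
        (hp3.const_mul a₃)
      refine this.congr_deriv ?_; push_cast; ring
    have heq : (fun t => (deriv Y t)^2)
        = fun t => a₀ + a₁ * Y t + a₂ * (Y t)^2 + a₃ * (Y t)^3 := funext hell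
    rw [heq] at h1
    exact h1.unique h2
  have hY2S : ∀ t, deriv Y t ≠ 0 →
      deriv (deriv Y) t = (a₁ + 2*a₂*Y t + 3*a₃*(Y t)^2)/2 := by
    intro t ht
    have h2 : (2 * deriv (deriv Y) t) * deriv Y t
        = (a₁ + 2*a₂*Y t + 3*a₃*(Y t)^2) * deriv Y t := by linear_combination keyB t
    have := mul_right_cancel₀ ht h2
    linarith
  have hSo : IsOpen {t : ℝ | deriv Y t ≠ 0} := isOpen_ne.preimage hY1.continuous
  -- u derivatives
  have du : ∀ ξ, deriv u ξ = 2 * (Y ξ * deriv Y ξ) := by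
    intro ξ
    have h : HasDerivAt u (2 * (Y ξ * deriv Y ξ)) ξ := by
      rw [funext hu]
      have := (dY ξ).pow 2
      refine this.congr_deriv ?_; push_cast; ring
    exact h.deriv
  have d2u : ∀ ξ, iteratedDeriv 2 u ξ
      = 2*(deriv Y ξ)^2 + 2*Y ξ*deriv (deriv Y) ξ := by
    intro ξ
    have h1 : iteratedDeriv 2 u = deriv (deriv u) := by
      rw [iteratedDeriv_succ, iteratedDeriv_one]
    rw [h1, funext du]
    have h := ((dY ξ).mul (dY1 ξ)).const_mul (2:ℝ)
    rw [HasDerivAt.deriv (f := fun x => 2 * (Y x * deriv Y x)) h]; ring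
  have hG2 : ∀ t ∈ {t : ℝ | deriv Y t ≠ 0}, iteratedDeriv 2 u t
      = 2*a₀ + 3*a₁*Y t + 4*a₂*(Y t)^2 + 5*a₃*(Y t)^3 := by
    intro t ht
    rw [d2u t, hY2S t ht]
    linear_combination 2 * hell t
  have hG3 : ∀ t ∈ {t : ℝ | deriv Y t ≠ 0}, iteratedDeriv 3 u t
      = (3*a₁ + 8*a₂*(Y t) + 15*a₃*(Y t)^2) * deriv Y t := by
    intro t ht
    have h1 : iteratedDeriv 3 u = deriv (iteratedDeriv 2 u) := iteratedDeriv_succ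
    rw [h1]
    have hev : iteratedDeriv 2 u =ᶠ[nhds t]
        (fun s => 2*a₀ + 3*a₁*Y s + 4*a₂*(Y s)^2 + 5*a₃*(Y s)^3) :=
      Filter.eventuallyEq_of_mem (hSo.mem_nhds ht) hG2
    rw [hev.deriv_eq]
    have h : HasDerivAt (fun s => 2*a₀ + 3*a₁*Y s + 4*a₂*(Y s)^2 + 5*a₃*(Y s)^3)
        ((3*a₁ + 8*a₂*(Y t) + 15*a₃*(Y t)^2) * deriv Y t) t := by
      have hp2 := (dY t).pow 2
      have hp3 := (dY t).pow 3
      have := ((((dY t).const_mul (3*a₁)).const_add (2*a₀)).add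
        (hp2.const_mul (4*a₂))).add (hp3.const_mul (5*a₃))
      refine this.congr_deriv ?_; push_cast; ring
    exact h.deriv
  have hG4 : ∀ t ∈ {t : ℝ | deriv Y t ≠ 0}, iteratedDeriv 4 u t
      = (8*a₂ + 30*a₃*Y t) * (a₀ + a₁*Y t + a₂*(Y t)^2 + a₃*(Y t)^3)
        + (3*a₁ + 8*a₂*Y t + 15*a₃*(Y t)^2) * ((a₁ + 2*a₂*Y t + 3*a₃*(Y t)^2)/2) := by
    intro t ht
    have h1 : iteratedDeriv 4 u = deriv (iteratedDeriv 3 u) := iteratedDeriv_succ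
    rw [h1]
    have hev : iteratedDeriv 3 u =ᶠ[nhds t]
        (fun s => (3*a₁ + 8*a₂*(Y s) + 15*a₃*(Y s)^2) * deriv Y s) :=
      Filter.eventuallyEq_of_mem (hSo.mem_nhds ht) hG3
    rw [hev.deriv_eq]
    have h : HasDerivAt (fun s => (3*a₁ + 8*a₂*(Y s) + 15*a₃*(Y s)^2) * deriv Y s)
        ((8*a₂*deriv Y t + 30*a₃*(Y t)*deriv Y t) * deriv Y t
          + (3*a₁ + 8*a₂*(Y t) + 15*a₃*(Y t)^2) * deriv (deriv Y) t) t := by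
      have hp2 := (dY t).pow 2
      have hin := (((dY t).const_mul (8*a₂)).const_add (3*a₁)).add (hp2.const_mul (15*a₃))
      have := hin.mul (dY1 t)
      refine this.congr_deriv ?_; simp only [Pi.add_apply, Pi.pow_apply]; push_cast; ring
    rw [h.deriv, hY2S t ht]
    linear_combination (8*a₂ + 30*a₃*Y t) * hell t
  -- the polynomial identity at points of the range
  have key : ∀ y : ℝ, y ∈ Set.Ioo p q → a₀ + a₁*y + a₂*y^2 + a₃*y^3 ≠ 0 →
      (2*α*a₀ - β*(8*a₀*a₂ + 3/2*a₁^2) - A)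
      + (3*α*a₁ - β*(15*a₁*a₂ + 30*a₀*a₃))*y
      + (-c + 4*α*a₂ - β*(16*a₂^2 + 42*a₁*a₃))*y^2
      + (5*α*a₃ - 65*β*a₂*a₃)*y^3
      + (κ/2 - 105/2*β*a₃^2)*y^4 = 0 := by
    intro y hy hP
    obtain ⟨t, rfl⟩ := hran hy
    have hd : deriv Y t ≠ 0 := by
      intro h
      apply hP
      rw [← hell t, h]; ring
    have h2 := hG2 t hd
    have h4 := hG4 t hd
    have ho := hode t
    rw [h2, h4, hu t] at ho
    linear_combination ho
  -- vanishing of all coefficients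
  have hfin : ({y : ℝ | a₀ + a₁*y + a₂*y^2 + a₃*y^3 = 0}).Finite := by
    have h : {y : ℝ | a₀ + a₁*y + a₂*y^2 + a₃*y^3 = 0}
        = {x | (C a₀ + C a₁ * X + C a₂ * X^2 + C a₃ * X^3 : ℝ[X]).IsRoot x} := by
      ext x; simp [Polynomial.IsRoot]
    rw [h]
    apply Polynomial.finite_setOf_isRoot
    intro hcon
    have := congrArg (Polynomial.coeff · 3) hcon
    simp at this
    exact ha₃ this
  have hT : (Set.Ioo p q \ {y : ℝ | a₀ + a₁*y + a₂*y^2 + a₃*y^3 = 0}).Infinite :=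
    (Set.Ioo_infinite hpq).diff hfin
  have hQ0 : (C (2*α*a₀ - β*(8*a₀*a₂ + 3/2*a₁^2) - A)
      + C (3*α*a₁ - β*(15*a₁*a₂ + 30*a₀*a₃)) * X
      + C (-c + 4*α*a₂ - β*(16*a₂^2 + 42*a₁*a₃)) * X^2
      + C (5*α*a₃ - 65*β*a₂*a₃) * X^3
      + C (κ/2 - 105/2*β*a₃^2) * X^4 : ℝ[X]) = 0 := by
    apply Polynomial.eq_zero_of_infinite_isRoot
    refine hT.mono ?_
    intro y hy
    have hk := key y hy.1 hy.2
    simp only [Set.mem_setOf_eq, Polynomial.IsRoot, Polynomial.eval_add, Polynomial.eval_mul,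
      Polynomial.eval_pow, Polynomial.eval_C, Polynomial.eval_X]
    linear_combination hk
  have coeffzero : ∀ q0 q1 q2 q3 q4 : ℝ,
      (C q0 + C q1 * X + C q2 * X^2 + C q3 * X^3 + C q4 * X^4 : ℝ[X]) = 0 →
      q0 = 0 ∧ q1 = 0 ∧ q2 = 0 ∧ q3 = 0 ∧ q4 = 0 := by
    intro q0 q1 q2 q3 q4 hq
    refine ⟨?_, ?_, ?_, ?_, ?_⟩
    · have := congrArg (Polynomial.coeff · 0) hq; simpa using this
    · have := congrArg (Polynomial.coeff · 1) hq; simpa using this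
    · have := congrArg (Polynomial.coeff · 2) hq; simpa using this
    · have := congrArg (Polynomial.coeff · 3) hq; simpa using this
    · have := congrArg (Polynomial.coeff · 4) hq; simpa using this
  obtain ⟨e0, e1, e2, e3, e4⟩ := coeffzero _ _ _ _ _ hQ0
  -- pure algebra: polynomial versions
  have hA3p : 105*β*a₃^2 = κ := by linear_combination (-2)*e4
  have hA2p : 13*β*a₂ = α := by
    have h5 : (5*α - 65*β*a₂) * a₃ = 0 := by linear_combination e3
    rcases mul_eq_zero.mp h5 with h | h
    · linarith
    · exact absurd h ha₃
  have hA13p : 7098*β^2*(a₁*a₃) = 36*α^2 - 169*c*β := by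
    linear_combination (-169*β)*e2 + (36*α - 208*β*a₂)*hA2p
  have h7 : 24*α*(a₁*a₃) - 390*β*a₀*a₃^2 = 0 := by
    linear_combination 13*a₃*e1 + 15*a₁*a₃*hA2p
  have hA0p : a₀*(13^3)*κ*β^2 = 2*α*(36*α^2 - 169*c*β) := by
    linear_combination (-(1183/2)*β^2)*h7 + 2*α*hA13p + (-2197*β^2*a₀)*hA3p
  have hA1p : 2399124*κ*β^3*a₁^2 = 5*(36*α^2 - 169*c*β)^2 := by
    linear_combination 5*(7098*β^2*a₁*a₃ + (36*α^2 - 169*c*β))*hA13p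
      + (-2399124*β^3*a₁^2)*hA3p
  -- division forms
  have hA3 : a₃^2 = κ / (105 * β) := by
    rw [eq_div_iff (by positivity : (105*β:ℝ) ≠ 0)]
    linear_combination hA3p
  have hA2 : a₂ = α / (13 * β) := by
    rw [eq_div_iff (by positivity : (13*β:ℝ) ≠ 0)]
    linear_combination hA2p
  have hA13 : a₁*a₃ = (36*α^2 - 169*c*β)/(7098*β^2) := by
    rw [eq_div_iff (by positivity : (7098*β^2:ℝ) ≠ 0)]
    linear_combination hA13p
  have hA0 : a₀ = 2 * α * (36 * α^2 - 169 * c * β) / (13^3 * κ * β^2) := by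
    rw [eq_div_iff (by positivity : ((13:ℝ)^3 * κ * β^2) ≠ 0)]
    linear_combination hA0p
  have hAval : A = (36 * α^2 - 169 * β * c) * (1836 * α^2 + 845 * β * c)
      / (8 * 7 * 13^4 * κ * β^2) := by
    rw [eq_div_iff (by positivity : ((8:ℝ) * 7 * 13^4 * κ * β^2) ≠ 0)]
    linear_combination (-1599416*κ*β^2)*e0 + (-1)*hA1p + (-984256*κ*β^2*a₀)*hA2p
      + 1008*α*hA0p
  -- sqrt part
  have hprod : Real.sqrt (κ/(105*β)) * Real.sqrt (5/(21*κ*β)) = 1/(21*β) := by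
    have hpos : (0:ℝ) < κ / (105*β) := by positivity
    rw [← Real.sqrt_mul hpos.le]
    have h : κ/(105*β) * (5/(21*κ*β)) = (1/(21*β))^2 := by field_simp; ring
    rw [h, Real.sqrt_sq (by positivity)]
  have hs3 : Real.sqrt (κ/(105*β)) = |a₃| := by
    rw [← hA3, Real.sqrt_sq_eq_abs]
  have hprod' : 21*β*(Real.sqrt (κ/(105*β)) * Real.sqrt (5/(21*κ*β))) = 1 := by
    rw [hprod]; field_simp
  have hc : a₁ * a₃ * (7098*β^2) = 36*α^2 - 169*c*β := by
    rw [hA13]; field_simp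
  have hdisj : ((a₃ = -Real.sqrt (κ / (105 * β)) ∧
        a₁ = Real.sqrt (5 / (21 * κ * β)) * (169 * c * β - 36 * α^2) / (2 * 169 * β)) ∨
     (a₃ = Real.sqrt (κ / (105 * β)) ∧
        a₁ = -(Real.sqrt (5 / (21 * κ * β)) * (169 * c * β - 36 * α^2) / (2 * 169 * β)))) := by
    rcases ha₃.lt_or_gt with hneg | hposa
    · left
      have h3 : a₃ = -Real.sqrt (κ/(105*β)) := by rw [hs3, abs_of_neg hneg]; ring
      refine ⟨h3, ?_⟩
      rw [h3] at hc
      rw [eq_div_iff (by positivity : (2*169*β:ℝ) ≠ 0)]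
      linear_combination (-(Real.sqrt (5/(21*κ*β))))*hc + (-338*β*a₁)*hprod'
    · right
      have h3 : a₃ = Real.sqrt (κ/(105*β)) := by rw [hs3, abs_of_pos hposa]
      refine ⟨h3, ?_⟩
      rw [h3] at hc
      rw [← neg_div, eq_div_iff (by positivity : (2*169*β:ℝ) ≠ 0)]
      linear_combination (Real.sqrt (5/(21*κ*β)))*hc + (-338*β*a₁)*hprod'
  exact ⟨hA3, hA2, hdisj, hA0, hAval⟩
end

section
/- Let β > 0, κ > 0, α > 0, c = 36α²/(169β), and u(x,t) = (105α²/(169κβ))·sech⁴(½√(α/(13β))·(x − ct)). Then u satisfies the Kawahara equation u_t + κ u u_x + α u_xxx − β u_xxxxx = 0. -/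
/-!
The wave is `u x t = A f (k (x - c t))` with `f = sech⁴`, so the equation reduces to the profile
equation `-c f' + κ A f f' + α k² f''' - β k⁴ f⁽⁵⁾ = 0`. Because `sinh² sech² = 1 - sech²`,
every derivative of `sech⁴` is a combination of even powers of `sech` and of `sinh` times odd
powers, and comparing coefficients gives `f⁽⁵⁾ = 52 f''' - 576 f' + 1680 f f'`. Since
`k² = α / (52 β)`, the given speed `c` and amplitude `A` are exactly the values that make the
coefficients of `f'`, `f f'` and `f'''` in the profile equation vanish.
-/

namespace Real

noncomputable def sech (y : ℝ) : ℝ := 1 / cosh y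

theorem contDiff_sech {n : WithTop ℕ∞} : ContDiff ℝ n sech :=
  contDiff_const.div contDiff_cosh fun y => (cosh_pos y).ne'

theorem cosh_mul_sech (y : ℝ) : cosh y * sech y = 1 :=
  mul_one_div_cancel (cosh_pos y).ne'

theorem sinh_sq_mul_sech_sq (y : ℝ) : sinh y ^ 2 * sech y ^ 2 = 1 - sech y ^ 2 := by
  linear_combination sech y ^ 2 * sinh_sq y + (cosh y * sech y + 1) * cosh_mul_sech y

theorem hasDerivAt_sech (y : ℝ) : HasDerivAt sech (-(sinh y * sech y ^ 2)) y := by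
  refine ((hasDerivAt_const y 1).div (hasDerivAt_cosh y) (cosh_pos y).ne').congr_deriv ?_
  simp only [sech]
  field_simp
  ring

theorem hasDerivAt_sech_pow (n : ℕ) (y : ℝ) :
    HasDerivAt (fun y => sech y ^ n) (-n * (sinh y * sech y ^ (n + 1))) y := by
  refine ((hasDerivAt_sech y).fun_pow n).congr_deriv ?_
  rcases n with _ | n
  · simp
  · push_cast; ring

theorem hasDerivAt_sinh_mul_sech_pow (n : ℕ) (y : ℝ) :
    HasDerivAt (fun y => sinh y * sech y ^ (n + 1))
      (-n * sech y ^ n + (n + 1) * sech y ^ (n + 2)) y := by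
  refine ((hasDerivAt_sinh y).mul (hasDerivAt_sech_pow (n + 1) y)).congr_deriv ?_
  push_cast
  linear_combination sech y ^ n * cosh_mul_sech y -
    ((n : ℝ) + 1) * sech y ^ n * sinh_sq_mul_sech_sq y

theorem iteratedDeriv_five_sech_pow_four (y : ℝ) :
    iteratedDeriv 5 (fun y => sech y ^ 4) y =
      52 * iteratedDeriv 3 (fun y => sech y ^ 4) y - 576 * deriv (fun y => sech y ^ 4) y
        + 1680 * sech y ^ 4 * deriv (fun y => sech y ^ 4) y := by
  have d1 : deriv (fun y => sech y ^ 4) = fun y => -4 * (sinh y * sech y ^ 5) :=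
    funext fun y => ((hasDerivAt_sech_pow 4 y).congr_deriv (by norm_num)).deriv
  have d2 : deriv (fun y => -4 * (sinh y * sech y ^ 5)) =
      fun y => 16 * sech y ^ 4 - 20 * sech y ^ 6 :=
    funext fun y => (((hasDerivAt_sinh_mul_sech_pow 4 y).const_mul (-4)).congr_deriv
      (by norm_num; ring)).deriv
  have d3 : deriv (fun y => 16 * sech y ^ 4 - 20 * sech y ^ 6) =
      fun y => -64 * (sinh y * sech y ^ 5) + 120 * (sinh y * sech y ^ 7) :=
    funext fun y => ((((hasDerivAt_sech_pow 4 y).const_mul 16).sub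
      ((hasDerivAt_sech_pow 6 y).const_mul 20)).congr_deriv (by norm_num; ring)).deriv
  have d4 : deriv (fun y => -64 * (sinh y * sech y ^ 5) + 120 * (sinh y * sech y ^ 7)) =
      fun y => 256 * sech y ^ 4 - 1040 * sech y ^ 6 + 840 * sech y ^ 8 :=
    funext fun y => ((((hasDerivAt_sinh_mul_sech_pow 4 y).const_mul (-64)).add
      ((hasDerivAt_sinh_mul_sech_pow 6 y).const_mul 120)).congr_deriv (by norm_num; ring)).deriv
  have d5 : deriv (fun y => 256 * sech y ^ 4 - 1040 * sech y ^ 6 + 840 * sech y ^ 8) =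
      fun y => -1024 * (sinh y * sech y ^ 5) + 6240 * (sinh y * sech y ^ 7)
        - 6720 * (sinh y * sech y ^ 9) :=
    funext fun y => (((((hasDerivAt_sech_pow 4 y).const_mul 256).sub
      ((hasDerivAt_sech_pow 6 y).const_mul 1040)).add
      ((hasDerivAt_sech_pow 8 y).const_mul 840)).congr_deriv (by norm_num; ring)).deriv
  simp only [iteratedDeriv_succ, iteratedDeriv_zero, d1, d2, d3, d4, d5]
  ring

end Real

open Real

noncomputable def travelingWave (A k c : ℝ) (f : ℝ → ℝ) (x t : ℝ) : ℝ :=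
  A * f (k * (x - c * t))

theorem iteratedDeriv_travelingWave_space {f : ℝ → ℝ} {n : ℕ} (hf : ContDiff ℝ n f)
    (A k c x t : ℝ) :
    iteratedDeriv n (fun x => travelingWave A k c f x t) x =
      A * k ^ n * iteratedDeriv n f (k * (x - c * t)) := by
  simp only [travelingWave, iteratedDeriv_const_mul_field,
    iteratedDeriv_comp_sub_const n (fun y => f (k * y)), iteratedDeriv_comp_const_mul hf]
  ring

theorem hasDerivAt_travelingWave_time {f : ℝ → ℝ} {A k c x t : ℝ}
    (hf : DifferentiableAt ℝ f (k * (x - c * t))) :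
    HasDerivAt (fun t => travelingWave A k c f x t)
      (-(A * k * c) * deriv f (k * (x - c * t))) t := by
  have hy : HasDerivAt (fun t => k * (x - c * t)) (-(k * c)) t := by
    simpa using (((hasDerivAt_id t).const_mul c).const_sub x).const_mul k
  refine ((hf.hasDerivAt.comp t hy).const_mul A).congr_deriv ?_
  ring

noncomputable def kawaharaOperator (κ α β : ℝ) (u : ℝ → ℝ → ℝ) (x t : ℝ) : ℝ :=
  deriv (fun t' => u x t') t + κ * u x t * deriv (fun x' => u x' t) x
    + α * iteratedDeriv 3 (fun x' => u x' t) x - β * iteratedDeriv 5 (fun x' => u x' t) x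

theorem kawaharaOperator_travelingWave {f : ℝ → ℝ} (hf : ContDiff ℝ 5 f) (κ α β A k c x t : ℝ) :
    kawaharaOperator κ α β (travelingWave A k c f) x t =
      A * k * (-c * deriv f (k * (x - c * t))
        + κ * A * f (k * (x - c * t)) * deriv f (k * (x - c * t))
        + α * k ^ 2 * iteratedDeriv 3 f (k * (x - c * t))
        - β * k ^ 4 * iteratedDeriv 5 f (k * (x - c * t))) := by
  have hd : DifferentiableAt ℝ f (k * (x - c * t)) :=
    (hf.differentiable (by norm_num)).differentiableAt
  have h1 := iteratedDeriv_travelingWave_space (hf.of_le (by norm_num) : ContDiff ℝ 1 f) A k c x t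
  have h3 := iteratedDeriv_travelingWave_space (hf.of_le (by norm_num) : ContDiff ℝ 3 f) A k c x t
  rw [iteratedDeriv_one, iteratedDeriv_one] at h1
  rw [kawaharaOperator, (hasDerivAt_travelingWave_time hd).deriv, h1, h3,
    iteratedDeriv_travelingWave_space hf, travelingWave]
  ring

/-- the sech⁴ soliton solves the Kawahara equation. -/
theorem stmt_9 (α β κ c : ℝ) (hβ : 0 < β) (hκ : 0 < κ) (hα : 0 < α)
    (hc : c = 36 * α^2 / (169 * β))
    (u : ℝ → ℝ → ℝ)
    (hu : ∀ x t : ℝ, u x t = (105 * α^2 / (169 * κ * β)) *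
      (1 / Real.cosh ((1/2) * Real.sqrt (α / (13 * β)) * (x - c * t)))^4) :
    ∀ x t : ℝ,
      deriv (fun t' => u x t') t
        + κ * u x t * deriv (fun x' => u x' t) x
        + α * iteratedDeriv 3 (fun x' => u x' t) x
        - β * iteratedDeriv 5 (fun x' => u x' t) x = 0 := by
  intro x t
  set A := 105 * α ^ 2 / (169 * κ * β) with hA
  set k := (1 / 2) * √(α / (13 * β))
  have hu_wave : u = travelingWave A k c (fun y => sech y ^ 4) := funext₂ hu
  have hk : 52 * β * k ^ 2 = α := by
    rw [mul_pow, sq_sqrt (by positivity)]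
    field_simp
    ring
  have hkc : 576 * β * k ^ 4 = c := by
    rw [hc, show k ^ 4 = (k ^ 2) ^ 2 by ring, ← hk]
    field_simp
    ring
  have hkA : 1680 * β * k ^ 4 = κ * A := by
    rw [hA, show k ^ 4 = (k ^ 2) ^ 2 by ring, ← hk]
    field_simp
    ring
  change kawaharaOperator κ α β u x t = 0
  rw [hu_wave, kawaharaOperator_travelingWave (contDiff_sech.pow 4),
    iteratedDeriv_five_sech_pow_four]
  linear_combination (A * k) * (deriv (fun y => sech y ^ 4) (k * (x - c * t))) *
    (hkc - (sech (k * (x - c * t))) ^ 4 * hkA)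
    - (A * k * k ^ 2) * iteratedDeriv 3 (fun y => sech y ^ 4) (k * (x - c * t)) * hk
end

section
/- Let β > 0, κ > 0, α < 0, c = 36α²/(169β), and u(x,t) = (105α²/(169κβ))·csc⁴(½√(−α/(13β))·(x−ct)). Then u satisfies the Kawahara equation u_t + κ u u_x + α u_xxx − β u_xxxxx = 0 at all points where it is defined (i.e., where the sine in the argument is nonzero). -/
/-!
The solution is a travelling wave `u(x, t) = A φ(k (x - c t))` with `φ = csc⁴`. Every derivative
of `csc⁴` is a polynomial in `csc` (times `cos` for odd orders), because `cos² csc² = csc² - 1`.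
In these closed forms the Kawahara equation becomes the profile identity
`-576 φ' + 1680 φ φ' - 52 φ''' - φ⁽⁵⁾ = 0`, a polynomial identity in `cos` and `csc`, once
`α = -52 β k²`, `c = 576 β k⁴` and `κ A = 1680 β k⁴` are substituted.
-/

open Set Filter Topology Real

section IteratedDeriv

variable {𝕜 E : Type*} [NontriviallyNormedField 𝕜] [NormedAddCommGroup E] [NormedSpace 𝕜 E]

theorem iteratedDeriv_eqOn_of_hasDerivAt {f : ℕ → 𝕜 → E} {U : Set 𝕜} (hU : IsOpen U) {n : ℕ}
    (hf : ∀ j < n, ∀ x ∈ U, HasDerivAt (f j) (f (j + 1) x) x) :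
    EqOn (iteratedDeriv n (f 0)) (f n) U := by
  induction n with
  | zero => intro x _; simp
  | succ n ih =>
    intro x hx
    have hn : iteratedDeriv n (f 0) =ᶠ[𝓝 x] f n :=
      eventually_of_mem (hU.mem_nhds hx) (ih fun j hj => hf j (by omega))
    rw [iteratedDeriv_succ, hn.deriv_eq, (hf n n.lt_succ_self x hx).deriv]

theorem iteratedDeriv_comp_eqOn_of_hasDerivAt {g : ℕ → 𝕜 → E} {V : Set 𝕜} (hV : IsOpen V)
    {n : ℕ} (hg : ∀ j < n, ∀ y ∈ V, HasDerivAt (g j) (g (j + 1) y) y) {ℓ : 𝕜 → 𝕜} {a : 𝕜}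
    (hℓ : ∀ x, HasDerivAt ℓ a x) :
    EqOn (iteratedDeriv n fun x => g 0 (ℓ x)) (fun x => a ^ n • g n (ℓ x)) (ℓ ⁻¹' V) := by
  have hcont : Continuous ℓ := continuous_iff_continuousAt.2 fun x => (hℓ x).continuousAt
  have h := iteratedDeriv_eqOn_of_hasDerivAt (f := fun j x => a ^ j • g j (ℓ x))
    (hV.preimage hcont) fun j hj x hx =>
      (((hg j hj (ℓ x) hx).scomp x (hℓ x)).const_smul (a ^ j)).congr_deriv
        (by rw [smul_smul, pow_succ])
  simpa using h

end IteratedDeriv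

noncomputable def csc (θ : ℝ) : ℝ := (sin θ)⁻¹

theorem sin_mul_csc {θ : ℝ} (h : sin θ ≠ 0) : sin θ * csc θ = 1 := mul_inv_cancel₀ h

theorem hasDerivAt_csc {θ : ℝ} (h : sin θ ≠ 0) :
    HasDerivAt csc (-cos θ * csc θ ^ 2) θ :=
  ((hasDerivAt_sin θ).inv h).congr_deriv (by rw [csc, inv_pow, div_eq_mul_inv])

theorem hasDerivAt_csc_pow (n : ℕ) {θ : ℝ} (h : sin θ ≠ 0) :
    HasDerivAt (fun θ => csc θ ^ n) (-n * cos θ * csc θ ^ (n + 1)) θ := by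
  rcases n with _ | n
  · simpa using hasDerivAt_const θ (1 : ℝ)
  · refine ((hasDerivAt_csc h).pow (n + 1)).congr_deriv ?_
    rw [Nat.add_sub_cancel]
    ring

theorem hasDerivAt_cos_mul_csc_pow (n : ℕ) {θ : ℝ} (h : sin θ ≠ 0) :
    HasDerivAt (fun θ => cos θ * csc θ ^ (n + 1))
      (n * csc θ ^ n - (n + 1) * csc θ ^ (n + 2)) θ := by
  refine ((hasDerivAt_cos θ).mul (hasDerivAt_csc_pow (n + 1) h)).congr_deriv ?_
  push_cast
  linear_combination (-(n + 1) * csc θ ^ (n + 2)) * sin_sq_add_cos_sq θ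
    + ((n + 1) * csc θ ^ n * (sin θ * csc θ + 1) - csc θ ^ n) * sin_mul_csc h

/-- Closed forms of the derivatives of `csc⁴` up to order 5 (junk `0` beyond). -/
noncomputable def cscFourDeriv : ℕ → ℝ → ℝ
  | 0, θ => csc θ ^ 4
  | 1, θ => -4 * (cos θ * csc θ ^ 5)
  | 2, θ => 20 * csc θ ^ 6 - 16 * csc θ ^ 4
  | 3, θ => -120 * (cos θ * csc θ ^ 7) + 64 * (cos θ * csc θ ^ 5)
  | 4, θ => 840 * csc θ ^ 8 - 1040 * csc θ ^ 6 + 256 * csc θ ^ 4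
  | 5, θ => -6720 * (cos θ * csc θ ^ 9) + 6240 * (cos θ * csc θ ^ 7)
      - 1024 * (cos θ * csc θ ^ 5)
  | _, _ => 0

theorem hasDerivAt_cscFourDeriv {j : ℕ} (hj : j < 5) {θ : ℝ} (h : sin θ ≠ 0) :
    HasDerivAt (cscFourDeriv j) (cscFourDeriv (j + 1) θ) θ := by
  have d := fun n => hasDerivAt_csc_pow n h
  have e := fun n => hasDerivAt_cos_mul_csc_pow n h
  interval_cases j
  · exact (d 4).congr_deriv (by simp only [cscFourDeriv]; push_cast; ring)
  · exact ((e 4).const_mul _).congr_deriv (by simp only [cscFourDeriv]; push_cast; ring)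
  · exact (((d 6).const_mul _).sub ((d 4).const_mul _)).congr_deriv
      (by simp only [cscFourDeriv]; push_cast; ring)
  · exact (((e 6).const_mul _).add ((e 4).const_mul _)).congr_deriv
      (by simp only [cscFourDeriv]; push_cast; ring)
  · exact ((((d 8).const_mul _).sub ((d 6).const_mul _)).add ((d 4).const_mul _)).congr_deriv
      (by simp only [cscFourDeriv]; push_cast; ring)

theorem cscFourDeriv_profile (θ : ℝ) :
    -576 * cscFourDeriv 1 θ + 1680 * cscFourDeriv 0 θ * cscFourDeriv 1 θ
      - 52 * cscFourDeriv 3 θ - cscFourDeriv 5 θ = 0 := by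
  simp only [cscFourDeriv]
  ring

theorem isOpen_sin_ne_zero : IsOpen {θ : ℝ | sin θ ≠ 0} :=
  isOpen_ne_fun continuous_sin continuous_const

section Wave

variable {A k c : ℝ} {x t : ℝ}

theorem iteratedDeriv_cscFour_wave_space (hsin : sin (k * (x - c * t)) ≠ 0) {n : ℕ}
    (hn : n ≤ 5) :
    iteratedDeriv n (fun x' => A * cscFourDeriv 0 (k * (x' - c * t))) x
      = A * (k ^ n * cscFourDeriv n (k * (x - c * t))) := by
  rw [iteratedDeriv_const_mul_field]
  congr 1
  refine iteratedDeriv_comp_eqOn_of_hasDerivAt isOpen_sin_ne_zero (g := cscFourDeriv) (n := n)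
    (fun j hj _ hθ => hasDerivAt_cscFourDeriv (by omega) hθ)
    (ℓ := fun x' => k * (x' - c * t)) (fun x' => ?_) hsin
  simpa using ((hasDerivAt_id' x').sub_const (c * t)).const_mul k

theorem deriv_cscFour_wave_time (hsin : sin (k * (x - c * t)) ≠ 0) :
    deriv (fun t' => A * cscFourDeriv 0 (k * (x - c * t'))) t
      = A * (-(k * c) * cscFourDeriv 1 (k * (x - c * t))) := by
  rw [← iteratedDeriv_one, iteratedDeriv_const_mul_field]
  congr 1
  refine (iteratedDeriv_comp_eqOn_of_hasDerivAt isOpen_sin_ne_zero (g := cscFourDeriv) (n := 1)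
    (fun j hj _ hθ => hasDerivAt_cscFourDeriv (by omega) hθ)
    (ℓ := fun t' => k * (x - c * t')) (a := -(k * c)) (fun t' => ?_) hsin).trans (by simp)
  exact ((((hasDerivAt_id' t').const_mul c).const_sub x).const_mul k).congr_deriv (by ring)

end Wave

/-- the csc⁴ solution of the Kawahara equation (α < 0). -/
theorem stmt_14 (α β κ c : ℝ) (hβ : 0 < β) (hκ : 0 < κ) (hα : α < 0)
    (hc : c = 36 * α^2 / (169 * β))
    (u : ℝ → ℝ → ℝ)
    (hu : ∀ x t : ℝ, u x t = (105 * α^2 / (169 * κ * β)) *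
      (1 / Real.sin ((1/2) * Real.sqrt (-α / (13 * β)) * (x - c * t)))^4) :
    ∀ x t : ℝ,
      Real.sin ((1/2) * Real.sqrt (-α / (13 * β)) * (x - c * t)) ≠ 0 →
      deriv (fun t' => u x t') t
        + κ * u x t * deriv (fun x' => u x' t) x
        + α * iteratedDeriv 3 (fun x' => u x' t) x
        - β * iteratedDeriv 5 (fun x' => u x' t) x = 0 := by
  intro x t hsin
  set k := (1/2) * Real.sqrt (-α / (13 * β)) with hk
  set A := 105 * α^2 / (169 * κ * β) with hA
  have hαk : α = -52 * β * k ^ 2 := by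
    rw [hk, mul_pow, sq_sqrt (div_nonneg (by linarith) (by linarith))]
    field_simp
    ring
  have hck : c = 576 * β * k ^ 4 := by rw [hc, hαk]; field_simp; ring
  have hAk : κ * A = 1680 * β * k ^ 4 := by rw [hA, hαk]; field_simp; ring
  have hu' : u = fun x t => A * cscFourDeriv 0 (k * (x - c * t)) := by
    ext x t
    rw [hu, cscFourDeriv, csc, one_div]
  subst hu'
  rw [deriv_cscFour_wave_time hsin, ← iteratedDeriv_one,
    iteratedDeriv_cscFour_wave_space hsin (by norm_num),
    iteratedDeriv_cscFour_wave_space hsin (by norm_num),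
    iteratedDeriv_cscFour_wave_space hsin (by norm_num)]
  set θ := k * (x - c * t)
  linear_combination (β * A * k ^ 5) * cscFourDeriv_profile θ
    - A * k * cscFourDeriv 1 θ * hck
    + A * k * cscFourDeriv 1 θ * cscFourDeriv 0 θ * hAk
    + A * k ^ 3 * cscFourDeriv 3 θ * hαk
end

section
/- Let β > 0, κ > 0, α > 0, c = 36α²/(169β), and u(x,t) = (105α²/(169κβ))·csch⁴(½√(α/(13β))·(x−ct)). Then u satisfies the Kawahara equation u_t + κ u u_x + α u_xxx − β u_xxxxx = 0 for all (x,t) with x ≠ ct. -/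
/-!
The solution is a travelling wave `u = A φ(k (x - c t))` with `φ = csch⁴`. Since
`csch² = coth² - 1` and `coth' = 1 - coth²`, every derivative of `φ` is a polynomial in
`coth`, obtained by iterating `p ↦ p' (1 - X²)` on `p = (X² - 1)²`. The Kawahara equation
thus reduces to a polynomial identity in `coth`, which holds for the stated `A`, `k` and `c`.
-/

open Polynomial

namespace Real

noncomputable def coth (x : ℝ) : ℝ := cosh x / sinh x

theorem coth_sq_sub_one {x : ℝ} (hx : sinh x ≠ 0) : coth x ^ 2 - 1 = (1 / sinh x) ^ 2 := by
  rw [coth]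
  field_simp
  linear_combination cosh_sq' x

theorem hasDerivAt_coth {x : ℝ} (hx : sinh x ≠ 0) : HasDerivAt coth (1 - coth x ^ 2) x := by
  refine ((hasDerivAt_cosh x).div (hasDerivAt_sinh x) hx).congr_deriv ?_
  rw [coth, div_pow, one_sub_div (pow_ne_zero 2 hx)]
  ring

end Real

open Real

/-- `(p.eval ∘ coth)' = (cothOp p).eval ∘ coth`. -/
noncomputable def cothOp (p : ℝ[X]) : ℝ[X] := derivative p * (1 - X ^ 2)

theorem iterate_cothOp_X_sq_sub_one_sq :
    cothOp^[1] ((X ^ 2 - 1) ^ 2) = -4 * X * (X ^ 2 - 1) ^ 2 ∧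
    cothOp^[3] ((X ^ 2 - 1) ^ 2) = -X * (120 * (X ^ 2 - 1) ^ 3 + 64 * (X ^ 2 - 1) ^ 2) ∧
    cothOp^[5] ((X ^ 2 - 1) ^ 2) =
      -X * (6720 * (X ^ 2 - 1) ^ 4 + 6240 * (X ^ 2 - 1) ^ 3 + 1024 * (X ^ 2 - 1) ^ 2) := by
  have h1 : cothOp ((X ^ 2 - 1) ^ 2) = -4 * X * (X ^ 2 - 1) ^ 2 := by
    simp only [cothOp, derivative_sub, derivative_pow, derivative_X, derivative_one,
      C_eq_natCast]
    ring
  have h2 : cothOp (-4 * X * (X ^ 2 - 1) ^ 2) = 20 * (X ^ 2 - 1) ^ 3 + 16 * (X ^ 2 - 1) ^ 2 := by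
    simp only [cothOp, derivative_mul, derivative_sub, derivative_neg, derivative_pow,
      derivative_X, derivative_one, derivative_ofNat, C_eq_natCast]
    ring
  have h3 : cothOp (20 * (X ^ 2 - 1) ^ 3 + 16 * (X ^ 2 - 1) ^ 2) =
      -X * (120 * (X ^ 2 - 1) ^ 3 + 64 * (X ^ 2 - 1) ^ 2) := by
    simp only [cothOp, derivative_mul, derivative_add, derivative_sub, derivative_pow,
      derivative_X, derivative_one, derivative_ofNat, C_eq_natCast]
    ring
  have h4 : cothOp (-X * (120 * (X ^ 2 - 1) ^ 3 + 64 * (X ^ 2 - 1) ^ 2)) =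
      840 * (X ^ 2 - 1) ^ 4 + 1040 * (X ^ 2 - 1) ^ 3 + 256 * (X ^ 2 - 1) ^ 2 := by
    simp only [cothOp, derivative_mul, derivative_add, derivative_sub, derivative_neg,
      derivative_pow, derivative_X, derivative_one, derivative_ofNat, C_eq_natCast]
    ring
  have h5 : cothOp (840 * (X ^ 2 - 1) ^ 4 + 1040 * (X ^ 2 - 1) ^ 3 + 256 * (X ^ 2 - 1) ^ 2) =
      -X * (6720 * (X ^ 2 - 1) ^ 4 + 6240 * (X ^ 2 - 1) ^ 3 + 1024 * (X ^ 2 - 1) ^ 2) := by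
    simp only [cothOp, derivative_mul, derivative_add, derivative_sub, derivative_pow,
      derivative_X, derivative_one, derivative_ofNat, C_eq_natCast]
    ring
  refine ⟨h1, ?_, ?_⟩ <;> simp only [Function.iterate_succ_apply', Function.iterate_zero_apply,
    h1, h2, h3, h4, h5]

theorem hasDerivAt_eval_coth_comp (p : ℝ[X]) (a b : ℝ) {x : ℝ} (hx : sinh (a * x + b) ≠ 0) :
    HasDerivAt (fun x => p.eval (coth (a * x + b)))
      (a * (cothOp p).eval (coth (a * x + b))) x := by
  have hlin : HasDerivAt (fun x => a * x + b) a x := by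
    simpa using ((hasDerivAt_id x).const_mul a).add_const b
  refine ((p.hasDerivAt _).comp x ((hasDerivAt_coth hx).comp x hlin)).congr_deriv ?_
  simp only [cothOp, eval_mul, eval_sub, eval_one, eval_pow, eval_X, Function.comp_apply]
  ring

theorem isOpen_setOf_sinh_affine_ne_zero (a b : ℝ) : IsOpen {x | sinh (a * x + b) ≠ 0} :=
  isOpen_ne_fun (by fun_prop) continuous_const

theorem eqOn_iteratedDeriv_const_mul_eval_coth_comp (A : ℝ) (p : ℝ[X]) (a b : ℝ) (n : ℕ) :
    Set.EqOn (iteratedDeriv n fun x => A * p.eval (coth (a * x + b)))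
      (fun x => A * a ^ n * (cothOp^[n] p).eval (coth (a * x + b)))
      {x | sinh (a * x + b) ≠ 0} := by
  induction n with
  | zero => intro x _; simp
  | succ n ih =>
    intro x hx
    rw [iteratedDeriv_succ, (Filter.eventuallyEq_of_mem
        ((isOpen_setOf_sinh_affine_ne_zero a b).mem_nhds hx) ih).deriv_eq,
      ((hasDerivAt_eval_coth_comp _ a b hx).const_mul (A * a ^ n)).deriv,
      Function.iterate_succ_apply']
    ring

theorem iteratedDeriv_const_mul_comp_affine_of_eq_eval_coth {f : ℝ → ℝ} {p : ℝ[X]}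
    (hf : ∀ y, sinh y ≠ 0 → f y = p.eval (coth y)) (A a b : ℝ) (n : ℕ) {x : ℝ}
    (hx : sinh (a * x + b) ≠ 0) :
    iteratedDeriv n (fun x => A * f (a * x + b)) x =
      A * a ^ n * (cothOp^[n] p).eval (coth (a * x + b)) := by
  have hfp : Set.EqOn (fun x => A * f (a * x + b)) (fun x => A * p.eval (coth (a * x + b)))
      {x | sinh (a * x + b) ≠ 0} := fun x hx => congrArg (A * ·) (hf _ hx)
  rw [hfp.iteratedDeriv_of_isOpen (isOpen_setOf_sinh_affine_ne_zero a b) n hx,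
    eqOn_iteratedDeriv_const_mul_eval_coth_comp A p a b n hx]

theorem csch_pow_four_eq_eval_coth {y : ℝ} (hy : sinh y ≠ 0) :
    (1 / sinh y) ^ 4 = ((X ^ 2 - 1) ^ 2 : ℝ[X]).eval (coth y) := by
  simp [coth_sq_sub_one hy, ← pow_mul]

theorem kawahara_identity_eval_coth {α β κ A c k : ℝ} (hβ : β ≠ 0) (hκ : κ ≠ 0)
    (hA : A = 105 * α ^ 2 / (169 * κ * β)) (hc : c = 36 * α ^ 2 / (169 * β))
    (hk : k ^ 2 = α / (52 * β)) (w : ℝ) :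
    A * -(k * c) * (cothOp^[1] ((X ^ 2 - 1) ^ 2)).eval w
      + κ * (A * ((X ^ 2 - 1) ^ 2 : ℝ[X]).eval w)
        * (A * k * (cothOp^[1] ((X ^ 2 - 1) ^ 2)).eval w)
      + α * (A * k ^ 3 * (cothOp^[3] ((X ^ 2 - 1) ^ 2)).eval w)
      - β * (A * k ^ 5 * (cothOp^[5] ((X ^ 2 - 1) ^ 2)).eval w) = 0 := by
  obtain ⟨h1, h3, h5⟩ := iterate_cothOp_X_sq_sub_one_sq
  have hk3 : k ^ 3 = k * (α / (52 * β)) := by rw [← hk]; ring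
  have hk5 : k ^ 5 = k * (α / (52 * β)) ^ 2 := by rw [← hk]; ring
  simp only [h1, h3, h5, eval_mul, eval_add, eval_sub, eval_neg, eval_pow, eval_X, eval_one,
    eval_ofNat]
  rw [hk3, hk5, hA, hc]
  field_simp
  ring

/-- the csch⁴ solution of the Kawahara equation (α > 0). -/
theorem stmt_15 (α β κ c : ℝ) (hβ : 0 < β) (hκ : 0 < κ) (hα : 0 < α)
    (hc : c = 36 * α^2 / (169 * β))
    (u : ℝ → ℝ → ℝ)
    (hu : ∀ x t : ℝ, u x t = (105 * α^2 / (169 * κ * β)) *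
      (1 / Real.sinh ((1/2) * Real.sqrt (α / (13 * β)) * (x - c * t)))^4) :
    ∀ x t : ℝ, x ≠ c * t →
      deriv (fun t' => u x t') t
        + κ * u x t * deriv (fun x' => u x' t) x
        + α * iteratedDeriv 3 (fun x' => u x' t) x
        - β * iteratedDeriv 5 (fun x' => u x' t) x = 0 := by
  intro x t hx
  set k := (1 / 2) * √(α / (13 * β))
  set A := 105 * α ^ 2 / (169 * κ * β)
  have hk : k ^ 2 = α / (52 * β) := by
    rw [mul_pow, sq_sqrt (by positivity)]
    field_simp
    ring
  have hξ : sinh (k * x + -(k * c * t)) ≠ 0 := by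
    have hk0 : k ≠ 0 := by positivity
    rw [Ne, sinh_eq_zero]
    intro h
    have hmul : k * (x - c * t) = 0 := by linear_combination h
    exact hx (sub_eq_zero.mp ((mul_eq_zero.mp hmul).resolve_left hk0))
  have hξ' : sinh (-(k * c) * t + k * x) ≠ 0 := by convert hξ using 2; ring
  have hux : (fun x' => u x' t) = fun x' => A * (1 / sinh (k * x' + -(k * c * t))) ^ 4 := by
    funext x'; rw [hu]; ring_nf
  have hut : (fun t' => u x t') = fun t' => A * (1 / sinh (-(k * c) * t' + k * x)) ^ 4 := by
    funext t'; rw [hu]; ring_nf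
  have hux0 : u x t = A * ((X ^ 2 - 1) ^ 2 : ℝ[X]).eval (coth (k * x + -(k * c * t))) := by
    rw [congrFun hux x, csch_pow_four_eq_eval_coth hξ]
  have hD := iteratedDeriv_const_mul_comp_affine_of_eq_eval_coth
    (fun _ => csch_pow_four_eq_eval_coth) A
  rw [hut, hux, ← iteratedDeriv_one, ← iteratedDeriv_one, hD _ _ 1 hξ', hD _ _ 1 hξ,
    hD _ _ 3 hξ, hD _ _ 5 hξ, hux0, show -(k * c) * t + k * x = k * x + -(k * c * t) by ring,
    pow_one, pow_one]
  exact kawahara_identity_eval_coth hβ.ne' hκ.ne' rfl hc hk _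
end
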